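/- arXiv:1507.03719 — 9 statements merged into one kernel-verified Lean document; each statement's English description precedes it below -/
import Mathlib

section
/- Let V be a finite ground set, let f : Finset V → ℝ be a nonnegative submodular function, let I ⊆ Finset V be a hereditary family, and let OPT ∈ I be a set maximizing f over I (i.e., f(OPT) ≥ f(S) for all S ∈ I). Then for all finite sets A ⊆ B ⊆ V, f(A ∩ OPT) ≤ f(B ∩ OPT). -/
/-- monotonicity of a nonnegative submodular function on subsets of the optimum
under a hereditary constraint. -/
theorem stmt0 {V : Type*} [Fintype V] [DecidableEq V]
    (f : Finset V → ℝ)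
    (hsub : ∀ A B : Finset V, A ⊆ B → ∀ e ∉ B,
      f (insert e A) - f A ≥ f (insert e B) - f B)
    (hnn : ∀ S : Finset V, 0 ≤ f S)
    (I : Set (Finset V))
    (hI : ∀ S ∈ I, ∀ T : Finset V, T ⊆ S → T ∈ I)
    (OPT : Finset V) (hOPT : OPT ∈ I)
    (hmax : ∀ S ∈ I, f S ≤ f OPT) :
    ∀ A B : Finset V, A ⊆ B → f (A ∩ OPT) ≤ f (B ∩ OPT) := by
  have key : ∀ D A B : Finset V, A ⊆ B → Disjoint D B →
      f (A ∪ D) - f A ≥ f (B ∪ D) - f B := by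
    intro D
    induction D using Finset.induction_on with
    | empty => intro A B _ _; simp
    | @insert e D heD ih =>
      intro A B hAB hdisj
      have hdisj' : Disjoint D B := (Finset.disjoint_insert_left.mp hdisj).2
      have heB : e ∉ B := (Finset.disjoint_insert_left.mp hdisj).1
      have heBD : e ∉ B ∪ D := by
        simp [heB, heD]
      have h1 := hsub (A ∪ D) (B ∪ D) (Finset.union_subset_union_left hAB) e heBD
      have h2 := ih A B hAB hdisj'
      have e1 : A ∪ insert e D = insert e (A ∪ D) := by
        ext x; simp [or_comm, or_left_comm]
      have e2 : B ∪ insert e D = insert e (B ∪ D) := by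
        ext x; simp [or_comm, or_left_comm]
      rw [e1, e2]
      linarith
  intro A B hAB
  set S := A ∩ OPT with hS
  set T := B ∩ OPT with hT
  have hST : S ⊆ T := Finset.inter_subset_inter hAB (le_refl _)
  have hTO : T ⊆ OPT := Finset.inter_subset_right
  set D := T \ S with hD
  set Y := OPT \ D with hY
  have hSY : S ⊆ Y := by
    intro x hx
    simp only [hY, hD, Finset.mem_sdiff] at *
    exact ⟨hTO (hST hx), fun h => h.2 hx⟩
  have hdisj : Disjoint D Y := by
    simp only [hY]
    exact Finset.sdiff_disjoint.symm
  have hSD : S ∪ D = T := by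
    simp [hD, Finset.union_sdiff_of_subset hST]
  have hYD : Y ∪ D = OPT := by
    have hDO : D ⊆ OPT := Finset.Subset.trans (Finset.sdiff_subset) hTO
    simp [hY, Finset.sdiff_union_of_subset hDO]
  have hkey := key D S Y hSY hdisj
  rw [hSD, hYD] at hkey
  have hYI : Y ∈ I := hI OPT hOPT Y (Finset.sdiff_subset)
  have := hmax Y hYI
  linarith
end

section
/- Let V be a finite ground set and f : Finset V → ℝ a submodular function. Then the Lovász extension f⁻ of f is a convex function on the cube [0,1]^V: for all x, y ∈ [0,1]^V and t ∈ [0,1], f⁻(t·x + (1−t)·y) ≤ t·f⁻(x) + (1−t)·f⁻(y). -/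
/-!
Fix an ordering `a₁, …, aₙ` of `V` and let
`g(x) = f ∅ + ∑ᵢ x aᵢ * (f {a₁, …, aᵢ} - f {a₁, …, aᵢ₋₁})`, a linear function of `x`.
If the ordering is decreasing for `x`, every level set `{e : θ ≤ x e}` is an initial segment
`{a₁, …, aᵢ}`, and integrating over `θ` gives `f⁻(x) = g(x)`. By submodularity, swapping two
adjacent elements into decreasing order of `x` does not decrease `g(x)`, so `f⁻(x)` is the maximum
of `g(x)` over all orderings: a maximum of linear functions, hence convex.
-/

open MeasureTheory

/-- The Lovász extension of a set function `f`:
`f⁻(x) = ∫₀¹ f({e : x_e ≥ θ}) dθ`. -/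
noncomputable def lovaszExt {V : Type*} [Fintype V] (f : Finset V → ℝ) (x : V → ℝ) : ℝ :=
  ∫ θ in (0:ℝ)..1, f (Finset.univ.filter (fun e => θ ≤ x e))

theorem List.exists_perm_pairwise_ge {V : Type*} (x : V → ℝ) (l : List V) :
    ∃ l' : List V, l'.Perm l ∧ l'.Pairwise (fun a b => x b ≤ x a) := by
  classical
  have : Std.Total (fun a b : V => x b ≤ x a) := ⟨fun a b => le_total (x b) (x a)⟩
  have : IsTrans V (fun a b => x b ≤ x a) := ⟨fun _ _ _ h₁ h₂ => h₂.trans h₁⟩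
  exact ⟨_, List.perm_insertionSort _ l, List.pairwise_insertionSort _ l⟩

section LovaszExtension

variable {V : Type*} [DecidableEq V]

def IsSubmodular (f : Finset V → ℝ) : Prop :=
  ∀ A B : Finset V, A ⊆ B → ∀ e ∉ B, f (insert e A) - f A ≥ f (insert e B) - f B

/-- `marginalSum f x [a₁, …, aₙ] S = ∑ᵢ x aᵢ * (f (S ∪ {a₁, …, aᵢ}) - f (S ∪ {a₁, …, aᵢ₋₁}))`. -/
noncomputable def marginalSum (f : Finset V → ℝ) (x : V → ℝ) : List V → Finset V → ℝ
  | [], _ => 0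
  | a :: l, S => x a * (f (insert a S) - f S) + marginalSum f x l (insert a S)

variable (f : Finset V → ℝ)

theorem marginalSum_eq_zero {x : V → ℝ} :
    ∀ {l : List V} (S : Finset V), (∀ e ∈ l, x e = 0) → marginalSum f x l S = 0
  | [], _, _ => rfl
  | a :: l, S, h => by
    rw [marginalSum, h a List.mem_cons_self,
      marginalSum_eq_zero (insert a S) fun e he => h e (List.mem_cons_of_mem a he)]
    ring

theorem marginalSum_mul_add_mul (x y : V → ℝ) (s t : ℝ) :
    ∀ (l : List V) (S : Finset V), marginalSum f (fun e => s * x e + t * y e) l S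
      = s * marginalSum f x l S + t * marginalSum f y l S
  | [], _ => by simp [marginalSum]
  | a :: l, S => by
    rw [marginalSum, marginalSum, marginalSum, marginalSum_mul_add_mul x y s t l]
    ring

theorem intervalIntegrable_marginalSum {w : ℝ → V → ℝ} {a b : ℝ}
    (hw : ∀ e, IntervalIntegrable (fun θ => w θ e) volume a b) :
    ∀ (l : List V) (S : Finset V), IntervalIntegrable (fun θ => marginalSum f (w θ) l S) volume a b
  | [], _ => intervalIntegrable_const
  | c :: l, S => by
    simpa only [marginalSum] using
      ((hw c).mul_const _).add (intervalIntegrable_marginalSum hw l (insert c S))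

theorem integral_marginalSum {w : ℝ → V → ℝ} {a b : ℝ}
    (hw : ∀ e, IntervalIntegrable (fun θ => w θ e) volume a b) :
    ∀ (l : List V) (S : Finset V),
      ∫ θ in a..b, marginalSum f (w θ) l S = marginalSum f (fun e => ∫ θ in a..b, w θ e) l S
  | [], _ => by simp [marginalSum]
  | c :: l, S => by
    simp only [marginalSum]
    rw [intervalIntegral.integral_add ((hw c).mul_const _)
        (intervalIntegrable_marginalSum f hw l (insert c S)),
      intervalIntegral.integral_mul_const, integral_marginalSum hw l (insert c S)]

theorem apply_union_filter_eq_add_marginalSum (x : V → ℝ) (θ : ℝ) :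
    ∀ {l : List V} {S : Finset V}, l.Nodup → l.Pairwise (fun a b => x b ≤ x a) →
      (∀ e ∈ l, e ∉ S) →
      f (S ∪ l.toFinset.filter (θ ≤ x ·))
        = f S + marginalSum f (fun e => if θ ≤ x e then 1 else 0) l S
  | [], S, _, _, _ => by simp [marginalSum]
  | a :: l, S, hnd, hs, hdisj => by
    obtain ⟨hal, hnd⟩ := List.nodup_cons.mp hnd
    obtain ⟨hle, hs⟩ := List.pairwise_cons.mp hs
    by_cases hθ : θ ≤ x a
    · have hdisj' : ∀ e ∈ l, e ∉ insert a S := fun e he => by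
        rw [Finset.mem_insert, not_or]
        exact ⟨fun h => hal (h ▸ he), hdisj e (List.mem_cons_of_mem a he)⟩
      have hunion : S ∪ (a :: l).toFinset.filter (θ ≤ x ·)
          = insert a S ∪ l.toFinset.filter (θ ≤ x ·) := by
        rw [List.toFinset_cons, Finset.filter_insert, if_pos hθ, Finset.union_insert,
          Finset.insert_union]
      rw [hunion, apply_union_filter_eq_add_marginalSum x θ hnd hs hdisj', marginalSum, if_pos hθ]
      ring
    · have hlt : ∀ e ∈ a :: l, x e < θ := by
        intro e he
        rcases List.mem_cons.mp he with rfl | he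
        · exact not_le.mp hθ
        · exact (hle e he).trans_lt (not_le.mp hθ)
      have hempty : (a :: l).toFinset.filter (θ ≤ x ·) = ∅ :=
        Finset.filter_eq_empty_iff.mpr fun e he => not_le.mpr (hlt e (List.mem_toFinset.mp he))
      rw [hempty, Finset.union_empty,
        marginalSum_eq_zero f S fun e he => if_neg (not_le.mpr (hlt e he)), add_zero]

theorem integral_ite_le_one_zero {c : ℝ} (hc : c ∈ Set.Icc (0 : ℝ) 1) :
    ∫ θ in (0 : ℝ)..1, (if θ ≤ c then (1 : ℝ) else 0) = c := by
  have hind : (fun θ : ℝ => if θ ≤ c then (1 : ℝ) else 0) = (Set.Iic c).indicator 1 := by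
    ext θ; simp [Set.indicator_apply]
  rw [hind, intervalIntegral.integral_of_le zero_le_one, integral_indicator_one measurableSet_Iic,
    measureReal_restrict_apply measurableSet_Iic, Set.Iic_inter_Ioc_of_le hc.2,
    Real.volume_real_Ioc_of_le hc.1, sub_zero]

theorem lovaszExt_eq_marginalSum [Fintype V] {x : V → ℝ} (hx : ∀ e, x e ∈ Set.Icc (0 : ℝ) 1)
    {l : List V} (hl : l.Perm Finset.univ.toList) (hs : l.Pairwise (fun a b => x b ≤ x a)) :
    lovaszExt f x = f ∅ + marginalSum f x l ∅ := by
  have hlevel (e : V) :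
      IntervalIntegrable (fun θ : ℝ => if θ ≤ x e then (1 : ℝ) else 0) volume 0 1 :=
    Antitone.intervalIntegrable fun θ₁ θ₂ h => by split_ifs <;> linarith
  have hpoint (θ : ℝ) : f (Finset.univ.filter (θ ≤ x ·))
      = f ∅ + marginalSum f (fun e => if θ ≤ x e then 1 else 0) l ∅ := by
    have := apply_union_filter_eq_add_marginalSum f x θ
      (hl.nodup_iff.mpr (Finset.nodup_toList _)) hs fun e _ => Finset.notMem_empty e
    rwa [List.toFinset_eq_of_perm _ _ hl, Finset.toList_toFinset, Finset.empty_union] at this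
  calc lovaszExt f x
      = ∫ θ in (0 : ℝ)..1, (f ∅ + marginalSum f (fun e => if θ ≤ x e then 1 else 0) l ∅) :=
        intervalIntegral.integral_congr fun θ _ => hpoint θ
    _ = f ∅ + marginalSum f (fun e => ∫ θ in (0 : ℝ)..1, if θ ≤ x e then 1 else 0) l ∅ := by
        rw [intervalIntegral.integral_add intervalIntegrable_const
          (intervalIntegrable_marginalSum f hlevel l ∅), integral_marginalSum f hlevel]
        simp
    _ = f ∅ + marginalSum f x l ∅ := by simp_rw [integral_ite_le_one_zero (hx _)]

theorem marginalSum_cons_cons_le (hf : IsSubmodular f) {x : V → ℝ} {a b : V} (l : List V)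
    {S : Finset V} (hab : a ≠ b) (hbS : b ∉ S) (hx : x a ≤ x b) :
    marginalSum f x (a :: b :: l) S ≤ marginalSum f x (b :: a :: l) S := by
  have hcomm : insert b (insert a S) = insert a (insert b S) := Finset.insert_comm b a S
  have hmarg := hf S (insert a S) (Finset.subset_insert a S) b (by simp [hab.symm, hbS])
  simp only [marginalSum, hcomm] at hmarg ⊢
  linarith [mul_nonneg (sub_nonneg.2 hx) (sub_nonneg.2 hmarg)]

theorem marginalSum_le_cons_of_forall_le (hf : IsSubmodular f) {x : V → ℝ} {b : V} :
    ∀ (l₁ l₂ : List V) {S : Finset V}, b ∉ l₁ → b ∉ S → (∀ a ∈ l₁, x a ≤ x b) →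
      marginalSum f x (l₁ ++ b :: l₂) S ≤ marginalSum f x (b :: (l₁ ++ l₂)) S
  | [], _, _, _, _, _ => le_rfl
  | a :: l₁, l₂, S, hb, hbS, hle => by
    have hab : a ≠ b := fun h => hb (h ▸ List.mem_cons_self)
    calc marginalSum f x (a :: l₁ ++ b :: l₂) S
        ≤ marginalSum f x (a :: b :: (l₁ ++ l₂)) S :=
          add_le_add_right (marginalSum_le_cons_of_forall_le hf l₁ l₂ (S := insert a S)
            (fun h => hb (List.mem_cons_of_mem a h)) (by simp [hab.symm, hbS])
            fun c hc => hle c (List.mem_cons_of_mem a hc)) _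
      _ ≤ marginalSum f x (b :: a :: (l₁ ++ l₂)) S :=
          marginalSum_cons_cons_le f hf _ hab hbS (hle a List.mem_cons_self)

theorem marginalSum_le_of_perm_of_pairwise (hf : IsSubmodular f) {x : V → ℝ} :
    ∀ {l l' : List V} {S : Finset V}, l.Perm l' → l.Nodup → l'.Pairwise (fun a b => x b ≤ x a) →
      (∀ e ∈ l, e ∉ S) → marginalSum f x l S ≤ marginalSum f x l' S
  | l, [], S, hperm, _, _, _ => by rw [List.perm_nil.mp hperm]
  | l, b :: l', S, hperm, hnd, hs, hdisj => by
    obtain ⟨l₁, l₂, rfl⟩ := List.append_of_mem (hperm.mem_iff.mpr List.mem_cons_self)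
    have hmid : (l₁ ++ b :: l₂).Perm (b :: (l₁ ++ l₂)) := List.perm_middle
    obtain ⟨hb, hnd'⟩ := List.nodup_cons.mp (hmid.nodup_iff.mp hnd)
    obtain ⟨hle, hs'⟩ := List.pairwise_cons.mp hs
    have hle₁ : ∀ a ∈ l₁, x a ≤ x b := fun a ha => by
      rcases List.mem_cons.mp (hperm.subset (List.mem_append_left _ ha)) with rfl | ha'
      · exact le_rfl
      · exact hle a ha'
    have hdisj' : ∀ e ∈ l₁ ++ l₂, e ∉ insert b S := fun e he => by
      rw [Finset.mem_insert, not_or]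
      exact ⟨fun h => hb (h ▸ he), hdisj e (hmid.symm.subset (List.mem_cons_of_mem b he))⟩
    calc marginalSum f x (l₁ ++ b :: l₂) S
        ≤ marginalSum f x (b :: (l₁ ++ l₂)) S :=
          marginalSum_le_cons_of_forall_le f hf l₁ l₂ (fun h => hb (List.mem_append_left _ h))
            (hdisj b (List.mem_append_right _ List.mem_cons_self)) hle₁
      _ ≤ marginalSum f x (b :: l') S :=
          add_le_add_right (marginalSum_le_of_perm_of_pairwise hf
            ((hmid.symm.trans hperm).cons_inv) hnd' hs' hdisj') _

theorem marginalSum_le_lovaszExt [Fintype V] (hf : IsSubmodular f) {x : V → ℝ}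
    (hx : ∀ e, x e ∈ Set.Icc (0 : ℝ) 1) {l : List V} (hl : l.Perm Finset.univ.toList) :
    f ∅ + marginalSum f x l ∅ ≤ lovaszExt f x := by
  obtain ⟨l', hl', hs⟩ := List.exists_perm_pairwise_ge x Finset.univ.toList
  rw [lovaszExt_eq_marginalSum f hx hl' hs]
  exact add_le_add_right (marginalSum_le_of_perm_of_pairwise f hf (hl.trans hl'.symm)
    (hl.nodup_iff.mpr (Finset.nodup_toList _)) hs fun e _ => Finset.notMem_empty e) _

end LovaszExtension

/-- the Lovász extension of a submodular function is convex on the cube. -/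
theorem stmt1 {V : Type*} [Fintype V] [DecidableEq V]
    (f : Finset V → ℝ)
    (hsub : ∀ A B : Finset V, A ⊆ B → ∀ e ∉ B,
      f (insert e A) - f A ≥ f (insert e B) - f B)
    (x y : V → ℝ)
    (hx : ∀ e, x e ∈ Set.Icc (0:ℝ) 1) (hy : ∀ e, y e ∈ Set.Icc (0:ℝ) 1)
    (t : ℝ) (ht : t ∈ Set.Icc (0:ℝ) 1) :
    lovaszExt f (fun e => t * x e + (1 - t) * y e)
      ≤ t * lovaszExt f x + (1 - t) * lovaszExt f y := by
  have hz : ∀ e, t * x e + (1 - t) * y e ∈ Set.Icc (0 : ℝ) 1 := fun e =>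
    convex_Icc (0 : ℝ) 1 (hx e) (hy e) ht.1 (sub_nonneg.2 ht.2) (add_sub_cancel t 1)
  obtain ⟨l, hl, hs⟩ := List.exists_perm_pairwise_ge (fun e => t * x e + (1 - t) * y e)
    Finset.univ.toList
  have hxl := marginalSum_le_lovaszExt f hsub hx hl
  have hyl := marginalSum_le_lovaszExt f hsub hy hl
  rw [lovaszExt_eq_marginalSum f hz hl hs, marginalSum_mul_add_mul]
  linarith [mul_le_mul_of_nonneg_left hxl ht.1, mul_le_mul_of_nonneg_left hyl (sub_nonneg.2 ht.2)]
end

section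
/- Let V be a finite ground set and f : Finset V → ℝ a nonnegative function. Then the Lovász extension f⁻ of f satisfies the restricted scale invariance property: for every x ∈ [0,1]^V and every c ∈ [0,1], f⁻(c·x) ≥ c·f⁻(x). -/
open MeasureTheory

lemma meas_aux {V : Type*} [Fintype V] (f : Finset V → ℝ) (y : V → ℝ) :
    Measurable (fun θ : ℝ => f (Finset.univ.filter (fun e => θ ≤ y e))) := by
  classical
  have hfun : (fun θ : ℝ => f (Finset.univ.filter (fun e => θ ≤ y e)))
      = fun θ => ∑ S ∈ (Finset.univ : Finset V).powerset,
          Set.indicator {θ' : ℝ | Finset.univ.filter (fun e => θ' ≤ y e) = S} (fun _ => f S) θ := by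
    funext θ
    rw [Finset.sum_congr rfl (fun S _ => Set.indicator_apply _ _ _)]
    simp only [Set.mem_setOf_eq]
    rw [Finset.sum_ite_eq (Finset.univ.powerset) (Finset.univ.filter (fun e => θ ≤ y e)) f]
    simp
  rw [hfun]
  apply Finset.measurable_sum
  intro S _
  apply Measurable.indicator measurable_const
  have : {θ' : ℝ | Finset.univ.filter (fun e => θ' ≤ y e) = S}
      = ⋂ e : V, {θ' : ℝ | θ' ≤ y e ↔ e ∈ S} := by
    ext θ'
    simp only [Set.mem_setOf_eq, Set.mem_iInter, Finset.ext_iff, Finset.mem_filter,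
      Finset.mem_univ, true_and]
  rw [this]
  apply MeasurableSet.iInter
  intro e
  by_cases he : e ∈ S
  · have : {θ' : ℝ | θ' ≤ y e ↔ e ∈ S} = Set.Iic (y e) := by ext; simp [he]
    rw [this]; exact measurableSet_Iic
  · have : {θ' : ℝ | θ' ≤ y e ↔ e ∈ S} = Set.Ioi (y e) := by
      ext θ'; simp only [Set.mem_setOf_eq, he, iff_false, not_le, Set.mem_Ioi]
    rw [this]; exact measurableSet_Ioi

lemma integrable_aux {V : Type*} [Fintype V] (f : Finset V → ℝ) (y : V → ℝ) (a b : ℝ) :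
    IntervalIntegrable (fun θ : ℝ => f (Finset.univ.filter (fun e => θ ≤ y e))) volume a b := by
  classical
  rw [intervalIntegrable_iff]
  apply Measure.integrableOn_of_bounded (M := ∑ S ∈ (Finset.univ : Finset V).powerset, |f S|)
  · rw [Set.uIoc]; simp [Real.volume_Ioc]
  · exact (meas_aux f y).aestronglyMeasurable
  · filter_upwards with θ
    exact Finset.single_le_sum (f := fun S => |f S|) (fun S _ => abs_nonneg _)
      (Finset.mem_powerset.mpr (Finset.filter_subset _ _))


/-- restricted scale invariance of the Lovász extension of a nonnegative
function: `f⁻(c·x) ≥ c·f⁻(x)` for `c ∈ [0,1]` and `x ∈ [0,1]^V`. -/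
theorem stmt2 {V : Type*} [Fintype V]
    (f : Finset V → ℝ)
    (hnn : ∀ S : Finset V, 0 ≤ f S)
    (x : V → ℝ) (hx : ∀ e, x e ∈ Set.Icc (0:ℝ) 1)
    (c : ℝ) (hc : c ∈ Set.Icc (0:ℝ) 1) :
    lovaszExt f (fun e => c * x e) ≥ c * lovaszExt f x := by
  obtain ⟨hc0, hc1⟩ := hc
  rcases eq_or_lt_of_le hc0 with h0 | h0
  · rw [← h0, zero_mul]
    exact intervalIntegral.integral_nonneg zero_le_one (fun u _ => hnn _)
  · have hcne : c ≠ 0 := ne_of_gt h0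
    have key : c * lovaszExt f x
        = ∫ θ in (0:ℝ)..c, f (Finset.univ.filter (fun e => θ ≤ c * x e)) := by
      have h1 := intervalIntegral.smul_integral_comp_mul_left
        (fun θ : ℝ => f (Finset.univ.filter (fun e => θ ≤ x e))) (c := c⁻¹) (a := 0) (b := c)
      simp only [mul_zero, inv_mul_cancel₀ hcne] at h1
      have h2 : ∀ θ : ℝ, Finset.univ.filter (fun e => c⁻¹ * θ ≤ x e)
          = Finset.univ.filter (fun e => θ ≤ c * x e) := by
        intro θ
        apply Finset.filter_congr
        intro e _
        rw [inv_mul_le_iff₀ h0]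
      simp only [h2] at h1
      calc c * lovaszExt f x = c * (c⁻¹ • ∫ θ in (0:ℝ)..c,
            f (Finset.univ.filter (fun e => θ ≤ c * x e))) := by
              rw [h1]; rfl
        _ = _ := by rw [smul_eq_mul, ← mul_assoc, mul_inv_cancel₀ hcne, one_mul]
    rw [ge_iff_le, key]
    have hsplit := intervalIntegral.integral_add_adjacent_intervals
      (integrable_aux f (fun e => c * x e) 0 c) (integrable_aux f (fun e => c * x e) c 1)
    unfold lovaszExt
    rw [← hsplit]
    have : (0:ℝ) ≤ ∫ θ in c..(1:ℝ), f (Finset.univ.filter (fun e => θ ≤ c * x e)) :=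
      intervalIntegral.integral_nonneg hc1 (fun u _ => hnn _)
    linarith
end

section
/- Let V be a finite ground set, m ≥ 1 and g ≥ 1 natural numbers, C ⊆ V a fixed set, e ∈ V ∖ C an element, and Rel : Finset V → Finset V any function satisfying Rel(N) ⊆ N for all N. For each group j ∈ {1,…,g}, let π_j : V → {1,…,m} be a uniformly random assignment (each element assigned independently and uniformly, and the g assignments mutually independent), and set X_{j,i} = π_j⁻¹(i). Let p = Pr_{X ∼ V(1/m)}[e ∈ Rel(C ∪ X ∪ {e})]. Then Pr[e ∈ ⋃_{j=1}^{g} ⋃_{i=1}^{m} Rel(C ∪ X_{j,i})] = 1 − (1 − p)^g. -/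
/-!
The element `e ∉ C` can only lie in `Rel (C ∪ X_{j,i}) ⊆ C ∪ X_{j,i}` for the block
`i = π_j e` that contains it, so the event is the union of `g` independent events, each of
probability `q = Pr_σ[e ∈ Rel (C ∪ σ⁻¹(σ e))]`, and has probability `1 - (1 - q)^g`.
The block `σ⁻¹(σ e)` contains `e` and every other element independently with probability
`1/m`: exactly `(m - 1)^(|V| - |X|)` maps `σ` have `σ⁻¹(a) = X`. Hence it is distributed as
`X ∪ {e}` with `X ∼ V(1/m)`, and `q = p`.
-/

open Finset

section Fibers

variable {V α : Type*} [Fintype V] [DecidableEq V] [Fintype α] [DecidableEq α]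

theorem card_filter_fiber_eq (a : α) (X : Finset V) :
    #{σ : V → α | univ.filter (σ · = a) = X} =
      (Fintype.card α - 1) ^ (Fintype.card V - #X) := by
  have hpi : ({σ : V → α | univ.filter (σ · = a) = X} : Finset (V → α)) =
      Fintype.piFinset fun v => if v ∈ X then {a} else univ.erase a := by
    ext σ
    simp only [Finset.ext_iff, mem_filter, mem_univ, true_and, Fintype.mem_piFinset]
    refine forall_congr' fun v => ?_
    split_ifs with hv <;> simp [hv, eq_comm]
  rw [hpi, Fintype.card_piFinset]
  simp [apply_ite card, prod_ite, filter_not, card_sdiff]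

variable {R : Type*} [CommRing R]

theorem sum_fiber_eq (a : α) (G : Finset V → R) :
    ∑ σ : V → α, G (univ.filter (σ · = a)) =
      ∑ X, ((Fintype.card α : R) - 1) ^ (Fintype.card V - #X) * G X := by
  rw [← sum_fiberwise univ fun σ : V → α => univ.filter (σ · = a)]
  refine sum_congr rfl fun X _ => ?_
  rw [sum_congr rfl fun σ hσ => congrArg G (mem_filter.1 hσ).2, sum_const, card_filter_fiber_eq,
    nsmul_eq_mul, Nat.cast_pow, Nat.cast_sub (Fintype.card_pos_iff.2 ⟨a⟩), Nat.cast_one]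

theorem sum_fiber_apply_self_eq (e : V) (f : Finset V → R) :
    ∑ σ : V → α, f (univ.filter (σ · = σ e)) =
      Fintype.card α *
        ∑ X, ((Fintype.card α : R) - 1) ^ (Fintype.card V - #X) * if e ∈ X then f X else 0 := by
  calc ∑ σ : V → α, f (univ.filter (σ · = σ e))
      = ∑ σ : V → α, ∑ a, if e ∈ univ.filter (σ · = a) then f (univ.filter (σ · = a)) else 0 := by
        simp
    _ = ∑ a : α, ∑ σ : V → α, if e ∈ univ.filter (σ · = a) then f (univ.filter (σ · = a)) else 0 :=
        sum_comm
    _ = _ := by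
        simp only [sum_fiber_eq _ fun X => if e ∈ X then f X else 0, sum_const, card_univ,
          nsmul_eq_mul]

theorem sum_pow_mul_apply_insert_eq (c : R) (e : V) (f : Finset V → R) :
    ∑ X, c ^ (Fintype.card V - #X) * f (insert e X) =
      (c + 1) * ∑ X, c ^ (Fintype.card V - #X) * if e ∈ X then f X else 0 := by
  have hsplit (F : Finset V → R) :
      ∑ X, F X = ∑ X ∈ (univ.erase e).powerset, (F X + F (insert e X)) := by
    conv_lhs => rw [← powerset_univ, ← insert_erase (mem_univ e)]
    rw [sum_powerset_insert (notMem_erase e univ), sum_add_distrib]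
  rw [hsplit, hsplit, mul_sum]
  refine sum_congr rfl fun X hX => ?_
  have heX : e ∉ X := fun h => (notMem_erase e univ) (mem_powerset.1 hX h)
  have hcard : Fintype.card V - #X = Fintype.card V - #(insert e X) + 1 := by
    have := card_le_univ (insert e X)
    rw [card_insert_of_notMem heX] at *
    omega
  simp only [insert_idem, heX, mem_insert_self, if_true, if_false, hcard, pow_succ]
  ring

theorem sum_fiber_apply_self_div_card_eq [Nonempty α] (e : V) (f : Finset V → ℝ) :
    (∑ σ : V → α, f (univ.filter (σ · = σ e))) / Fintype.card (V → α) =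
      ∑ X, ((1 / Fintype.card α : ℝ) ^ #X * (1 - 1 / Fintype.card α) ^ (Fintype.card V - #X)) *
        f (insert e X) := by
  have hk : (Fintype.card α : ℝ) ≠ 0 := by positivity
  have hweight (X : Finset V) :
      (1 / Fintype.card α : ℝ) ^ #X * (1 - 1 / Fintype.card α) ^ (Fintype.card V - #X) =
        ((Fintype.card α : ℝ) - 1) ^ (Fintype.card V - #X) / Fintype.card α ^ Fintype.card V := by
    rw [one_sub_div hk, div_pow, div_pow, one_pow, div_mul_div_comm, one_mul, ← pow_add,
      Nat.add_sub_cancel' (card_le_univ X)]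
  simp_rw [hweight, div_mul_eq_mul_div, ← sum_div, sum_pow_mul_apply_insert_eq, sub_add_cancel,
    sum_fiber_apply_self_eq, Fintype.card_fun, Nat.cast_pow]

end Fibers

theorem sum_ite_exists_div_card_eq {ι β : Type*} [Fintype ι] [DecidableEq ι] [Fintype β]
    [Nonempty β] (P : β → Prop) [DecidablePred P] :
    (∑ π : ι → β, if ∃ j, P (π j) then (1 : ℝ) else 0) / Fintype.card (ι → β) =
      1 - (1 - (∑ b, if P b then (1 : ℝ) else 0) / Fintype.card β) ^ Fintype.card ι := by
  set q : β → ℝ := fun b => 1 - if P b then 1 else 0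
  have hind (π : ι → β) : (if ∃ j, P (π j) then (1 : ℝ) else 0) = 1 - ∏ j, q (π j) := by
    split_ifs with h
    · obtain ⟨j, hj⟩ := h
      rw [prod_eq_zero (mem_univ j) (by simp [q, hj]), sub_zero]
    · push Not at h
      rw [prod_eq_one fun j _ => by simp [q, h j], sub_self]
  have hN : (Fintype.card β : ℝ) ≠ 0 := by positivity
  simp_rw [hind, sum_sub_distrib, ← Fintype.prod_sum, prod_const, sum_const, card_univ,
    Fintype.card_fun, q, sum_sub_distrib, sum_const, card_univ]
  rw [one_sub_div hN, div_pow, one_sub_div (pow_ne_zero _ hN)]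
  simp only [nsmul_eq_mul, mul_one, Nat.cast_pow]

theorem exists_mem_fiber_iff_mem_fiber_apply_self {V α : Type*} [Fintype V] [DecidableEq V]
    [DecidableEq α] {C : Finset V} {e : V} (he : e ∉ C) {Rel : Finset V → Finset V}
    (hRel : ∀ N : Finset V, Rel N ⊆ N) (σ : V → α) :
    (∃ i, e ∈ Rel (C ∪ univ.filter (σ · = i))) ↔ e ∈ Rel (C ∪ univ.filter (σ · = σ e)) := by
  refine ⟨fun ⟨i, hi⟩ => ?_, fun h => ⟨σ e, h⟩⟩
  obtain rfl : σ e = i := by simpa [he] using hRel _ hi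
  exact hi

theorem stmt7_general {V : Type*} [Fintype V] [DecidableEq V]
    (m g : ℕ) (hm : 1 ≤ m)
    (C : Finset V) (e : V) (he : e ∉ C)
    (Rel : Finset V → Finset V) (hRel : ∀ N : Finset V, Rel N ⊆ N)
    (p : ℝ)
    (hp : p = ∑ X : Finset V,
      ((1 / (m:ℝ)) ^ X.card * (1 - 1 / (m:ℝ)) ^ (Fintype.card V - X.card)) *
        (if e ∈ Rel (C ∪ X ∪ {e}) then 1 else 0)) :
    (∑ π : Fin g → V → Fin m,
        (if ∃ j : Fin g, ∃ i : Fin m,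
            e ∈ Rel (C ∪ Finset.univ.filter (fun v => π j v = i)) then (1:ℝ) else 0))
      / (Fintype.card (Fin g → V → Fin m) : ℝ)
      = 1 - (1 - p) ^ g := by
  have : Nonempty (Fin m) := ⟨⟨0, hm⟩⟩
  have hblock :
      (∑ σ : V → Fin m, if ∃ i, e ∈ Rel (C ∪ univ.filter (σ · = i)) then (1 : ℝ) else 0) /
        Fintype.card (V → Fin m) = p := by
    simp_rw [exists_mem_fiber_iff_mem_fiber_apply_self he hRel,
      sum_fiber_apply_self_div_card_eq e fun X => if e ∈ Rel (C ∪ X) then 1 else 0, hp,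
      Fintype.card_fin, union_assoc, union_singleton]
  have hrepeat := sum_ite_exists_div_card_eq (ι := Fin g)
    fun σ : V → Fin m => ∃ i, e ∈ Rel (C ∪ univ.filter (σ · = i))
  rw [hblock, Fintype.card_fin] at hrepeat
  convert hrepeat

/-- the probability that a fixed element `e ∉ C` lands in the union of the
relevant sets over `g` independent random partitions of `V` into `m` parts equals
`1 - (1 - p)^g`, where `p = Pr_{X ∼ V(1/m)}[e ∈ Rel(C ∪ X ∪ {e})]`. -/
theorem stmt7 {V : Type*} [Fintype V] [DecidableEq V]
    (m g : ℕ) (hm : 1 ≤ m) (hg : 1 ≤ g)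
    (C : Finset V) (e : V) (he : e ∉ C)
    (Rel : Finset V → Finset V) (hRel : ∀ N : Finset V, Rel N ⊆ N)
    (p : ℝ)
    (hp : p = ∑ X : Finset V,
      ((1 / (m:ℝ)) ^ X.card * (1 - 1 / (m:ℝ)) ^ (Fintype.card V - X.card)) *
        (if e ∈ Rel (C ∪ X ∪ {e}) then 1 else 0)) :
    (∑ π : Fin g → V → Fin m,
        (if ∃ j : Fin g, ∃ i : Fin m,
            e ∈ Rel (C ∪ Finset.univ.filter (fun v => π j v = i)) then (1:ℝ) else 0))
      / (Fintype.card (Fin g → V → Fin m) : ℝ)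
      = 1 - (1 - p) ^ g :=
  stmt7_general m g hm C e he Rel hRel p hp
end

section
/- Let V be a finite ground set, f : Finset V → ℝ a nonnegative function, c ∈ [0,1], and S ⊆ V a finite set. Let x ∈ [0,1]^V satisfy x_e ≤ c for every e ∈ V. Then the Lovász extension satisfies f⁻((x + 1_S)/2) ≥ ((1 − c)/2)·f(S). -/
/-! For `θ ∈ (c/2, 1/2]` the superlevel set `{e : θ ≤ (x_e + 1_S(e))/2}` is exactly `S`, so this
stretch of length `(1 - c)/2` contributes `((1 - c)/2)·f(S)` to the Lovász integral, and by
nonnegativity of `f` the rest of `[0, 1]` contributes at least `0`. -/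

open MeasureTheory

namespace LovaszExt

variable {V : Type*} [Fintype V]

lemma measurable_superlevelSet (x : V → ℝ) :
    Measurable fun θ : ℝ => Finset.univ.filter fun e => θ ≤ x e :=
  measurable_finset_iff.2 fun e => by simpa using measurableSet_setOfPred.1 measurableSet_Iic

lemma intervalIntegrable_comp_superlevelSet (f : Finset V → ℝ) (x : V → ℝ) (a b : ℝ) :
    IntervalIntegrable (fun θ => f (Finset.univ.filter fun e => θ ≤ x e)) volume a b := by
  obtain ⟨C, hC⟩ := Finite.exists_le fun T => ‖f T‖
  have hmeas := (measurable_of_finite f).comp (measurable_superlevelSet x)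
  exact ⟨.of_bound measure_Ioc_lt_top hmeas.aestronglyMeasurable C (.of_forall fun _ => hC _),
    .of_bound measure_Ioc_lt_top hmeas.aestronglyMeasurable C (.of_forall fun _ => hC _)⟩

lemma integral_le_lovaszExt {f : Finset V → ℝ} (hf : ∀ T, 0 ≤ f T) (x : V → ℝ) {a b : ℝ}
    (ha : 0 ≤ a) (hab : a ≤ b) (hb : b ≤ 1) :
    ∫ θ in a..b, f (Finset.univ.filter fun e => θ ≤ x e) ≤ lovaszExt f x :=
  intervalIntegral.integral_mono_interval ha hab hb (.of_forall fun _ => hf _)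
    (intervalIntegrable_comp_superlevelSet f x 0 1)

lemma mul_le_lovaszExt_of_superlevelSet_eq {f : Finset V → ℝ} (hf : ∀ T, 0 ≤ f T)
    {x : V → ℝ} {S : Finset V} {a b : ℝ} (ha : 0 ≤ a) (hab : a ≤ b) (hb : b ≤ 1)
    (hS : ∀ θ ∈ Set.Ioc a b, Finset.univ.filter (fun e => θ ≤ x e) = S) :
    (b - a) * f S ≤ lovaszExt f x :=
  calc (b - a) * f S = ∫ _ in a..b, f S := by
        rw [intervalIntegral.integral_const, smul_eq_mul]
    _ = ∫ θ in a..b, f (Finset.univ.filter fun e => θ ≤ x e) :=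
        intervalIntegral.integral_congr_ae <| .of_forall fun θ hθ => by
          rw [hS θ (Set.uIoc_of_le hab ▸ hθ)]
    _ ≤ lovaszExt f x := integral_le_lovaszExt hf x ha hab hb

end LovaszExt

open LovaszExt in
/-- for a nonnegative `f`, if `x ∈ [0,1]^V` with `x_e ≤ c` for all `e`, then
`f⁻((x + 1_S)/2) ≥ ((1 - c)/2)·f(S)`. -/
theorem stmt10 {V : Type*} [Fintype V] [DecidableEq V]
    (f : Finset V → ℝ)
    (hnn : ∀ S : Finset V, 0 ≤ f S)
    (c : ℝ) (hc : c ∈ Set.Icc (0:ℝ) 1)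
    (S : Finset V)
    (x : V → ℝ) (hx : ∀ e, x e ∈ Set.Icc (0:ℝ) 1) (hxc : ∀ e, x e ≤ c) :
    lovaszExt f (fun e => (x e + (if e ∈ S then (1:ℝ) else 0)) / 2)
      ≥ ((1 - c) / 2) * f S := by
  have hS : ∀ θ ∈ Set.Ioc (c / 2) (1 / 2),
      Finset.univ.filter (fun e => θ ≤ (x e + (if e ∈ S then (1:ℝ) else 0)) / 2) = S := by
    rintro θ ⟨hcθ, hθ⟩
    ext e
    by_cases he : e ∈ S
    · simp only [he, if_true, Finset.mem_filter, Finset.mem_univ, true_and, iff_true]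
      linarith [(hx e).1]
    · simp only [he, if_false, Finset.mem_filter, Finset.mem_univ, true_and, iff_false, not_le]
      linarith [hxc e]
  calc ((1 - c) / 2) * f S = (1 / 2 - c / 2) * f S := by ring
    _ ≤ _ := mul_le_lovaszExt_of_superlevelSet_eq hnn (by linarith [hc.1]) (by linarith [hc.2])
        (by norm_num) hS
end

section
/- Let X_1, …, X_m be independent random variables with X_i ∈ [0,1] for each i, let X = (1/m)·∑_{i=1}^m X_i, and let μ = E[X]. Then for all α ∈ [0,1] and β ≥ 0: Pr[X > (1+α)·μ + β] ≤ exp(−m·α·β/3) and Pr[X < (1−α)·μ − β] ≤ exp(−m·α·β/2). -/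
open MeasureTheory ProbabilityTheory Real

/-!
For `Y ∈ [0, 1]`, convexity of `exp` gives `𝔼 e^{tY} ≤ 1 + (e^t - 1) 𝔼Y ≤ exp ((e^t - 1) 𝔼Y)`, and
independence multiplies these bounds, so the sum `S` of the `X i` satisfies
`mgf S t ≤ exp ((e^t - 1) 𝔼S)` for every `t`. The exponential Markov inequality at `t = α / 3`
(upper tail) and `t = -α / 2` (lower tail), together with `e^x - 1 ≤ x + x²` for `|x| ≤ 1`,
leaves a nonpositive multiple of `α² 𝔼S` in the exponent, which is dropped; the slack `b = m β`
contributes `-α b / 3` resp. `-α b / 2`.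
-/

lemma exp_sub_one_le_add_sq {x : ℝ} (hx : |x| ≤ 1) : exp x - 1 ≤ x + x ^ 2 := by
  linarith [(abs_le.1 (abs_exp_sub_one_sub_id_le hx)).2]

section

variable {Ω : Type*} [MeasurableSpace Ω] {μ : Measure Ω} [IsProbabilityMeasure μ]

lemma mgf_le_exp_of_mem_Icc_zero_one {Y : Ω → ℝ} (hY : AEMeasurable Y μ)
    (hb : ∀ᵐ ω ∂μ, Y ω ∈ Set.Icc (0 : ℝ) 1) (t : ℝ) :
    mgf Y μ t ≤ exp ((exp t - 1) * μ[Y]) := by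
  have hY_int : Integrable Y μ := .of_mem_Icc 0 1 hY hb
  have hchord : ∀ᵐ ω ∂μ, exp (t * Y ω) ≤ 1 + (exp t - 1) * Y ω := by
    filter_upwards [hb] with ω ⟨h0, h1⟩
    have h := convexOn_exp.2 (Set.mem_univ 0) (Set.mem_univ t)
      (sub_nonneg.2 h1) h0 (sub_add_cancel 1 (Y ω))
    simp only [smul_eq_mul, mul_zero, zero_add, exp_zero, mul_one] at h
    rw [mul_comm] at h
    linarith
  calc mgf Y μ t ≤ ∫ ω, 1 + (exp t - 1) * Y ω ∂μ :=
        integral_mono_ae (integrable_exp_mul_of_mem_Icc hY hb)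
          ((integrable_const 1).add (hY_int.const_mul _)) hchord
    _ = 1 + (exp t - 1) * μ[Y] := by
        rw [integral_add (integrable_const 1) (hY_int.const_mul _), integral_const_mul]
        simp
    _ ≤ exp ((exp t - 1) * μ[Y]) := by linarith [add_one_le_exp ((exp t - 1) * μ[Y])]

lemma ProbabilityTheory.iIndepFun.mgf_sum_le {ι : Type*} {X : ι → Ω → ℝ}
    (hindep : iIndepFun X μ) (hmeas : ∀ i, Measurable (X i))
    (hb : ∀ i, ∀ᵐ ω ∂μ, X i ω ∈ Set.Icc (0 : ℝ) 1)
    (s : Finset ι) (t : ℝ) :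
    mgf (∑ i ∈ s, X i) μ t ≤ exp ((exp t - 1) * ∑ i ∈ s, μ[X i]) := by
  rw [hindep.mgf_sum hmeas, Finset.mul_sum, exp_sum]
  exact Finset.prod_le_prod (fun i _ => mgf_nonneg)
    (fun i _ => mgf_le_exp_of_mem_Icc_zero_one (hmeas i).aemeasurable (hb i) t)

lemma measure_ge_le_of_mgf_le {S : Ω → ℝ} {t c : ℝ} (a : ℝ) (ht : 0 ≤ t)
    (hint : Integrable (fun ω => exp (t * S ω)) μ) (hmgf : mgf S μ t ≤ exp c) :
    μ {ω | a ≤ S ω} ≤ ENNReal.ofReal (exp (-t * a + c)) := by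
  rw [← ofReal_measureReal, exp_add]
  exact ENNReal.ofReal_le_ofReal ((measure_ge_le_exp_mul_mgf a ht hint).trans
    (mul_le_mul_of_nonneg_left hmgf (exp_pos _).le))

lemma measure_le_le_of_mgf_le {S : Ω → ℝ} {t c : ℝ} (a : ℝ) (ht : t ≤ 0)
    (hint : Integrable (fun ω => exp (t * S ω)) μ) (hmgf : mgf S μ t ≤ exp c) :
    μ {ω | S ω ≤ a} ≤ ENNReal.ofReal (exp (-t * a + c)) := by
  rw [← ofReal_measureReal, exp_add]
  exact ENNReal.ofReal_le_ofReal ((measure_le_le_exp_mul_mgf a ht hint).trans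
    (mul_le_mul_of_nonneg_left hmgf (exp_pos _).le))

variable {S : Ω → ℝ} {E : ℝ} (hE : 0 ≤ E)
  (hint : ∀ t, Integrable (fun ω => exp (t * S ω)) μ)
  (hmgf : ∀ t, mgf S μ t ≤ exp ((exp t - 1) * E))
include hE hint hmgf

lemma measure_upper_tail_le_of_mgf_le {α : ℝ} (hα0 : 0 ≤ α) (hα3 : α ≤ 3) (b : ℝ) :
    μ {ω | (1 + α) * E + b ≤ S ω} ≤ ENNReal.ofReal (exp (-(α * b) / 3)) := by
  refine (measure_ge_le_of_mgf_le _ (by positivity) (hint (α / 3)) (hmgf (α / 3))).trans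
    (ENNReal.ofReal_le_ofReal (exp_le_exp.2 ?_))
  have h := exp_sub_one_le_add_sq (x := α / 3) (by rw [abs_of_nonneg (by positivity)]; linarith)
  nlinarith [mul_le_mul_of_nonneg_right h hE, mul_nonneg (mul_nonneg hα0 hα0) hE]

lemma measure_lower_tail_le_of_mgf_le {α : ℝ} (hα0 : 0 ≤ α) (hα2 : α ≤ 2) (b : ℝ) :
    μ {ω | S ω ≤ (1 - α) * E - b} ≤ ENNReal.ofReal (exp (-(α * b) / 2)) := by
  refine (measure_le_le_of_mgf_le _ (by linarith) (hint (-α / 2)) (hmgf (-α / 2))).trans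
    (ENNReal.ofReal_le_ofReal (exp_le_exp.2 ?_))
  have h := exp_sub_one_le_add_sq (x := -α / 2)
    (by rw [abs_of_nonpos (by linarith)]; linarith)
  nlinarith [mul_le_mul_of_nonneg_right h hE, mul_nonneg (mul_nonneg hα0 hα0) hE]

end

theorem stmt14_general {Ω : Type*} [MeasurableSpace Ω]
    (μ : Measure Ω) [IsProbabilityMeasure μ]
    (m : ℕ) (hm : 1 ≤ m)
    (X : Fin m → Ω → ℝ)
    (hmeas : ∀ i, Measurable (X i))
    (hindep : iIndepFun X μ)
    (hbound : ∀ i, ∀ᵐ ω ∂μ, X i ω ∈ Set.Icc (0:ℝ) 1)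
    (α β : ℝ) (hα : α ∈ Set.Icc (0:ℝ) 1) :
    μ {ω | (∑ i, X i ω) / m >
        (1 + α) * (∫ ω, (∑ i, X i ω) / m ∂μ) + β}
      ≤ ENNReal.ofReal (Real.exp (-(m * α * β) / 3))
    ∧
    μ {ω | (∑ i, X i ω) / m <
        (1 - α) * (∫ ω, (∑ i, X i ω) / m ∂μ) - β}
      ≤ ENNReal.ofReal (Real.exp (-(m * α * β) / 2)) := by
  obtain ⟨hα0, hα1⟩ := hα
  have hm0 : (0 : ℝ) < m := by exact_mod_cast hm
  set E := ∑ i, μ[X i]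
  have hE : 0 ≤ E :=
    Finset.sum_nonneg fun i _ => integral_nonneg_of_ae ((hbound i).mono fun _ h => h.1)
  have hmean : ∫ ω, (∑ i, X i ω) / m ∂μ = E / m := by
    rw [integral_div,
      integral_finsetSum _ fun i _ => .of_mem_Icc 0 1 (hmeas i).aemeasurable (hbound i)]
  have hint : ∀ t, Integrable (fun ω => exp (t * (∑ i, X i) ω)) μ := fun t =>
    hindep.integrable_exp_mul_sum hmeas fun i _ =>
      integrable_exp_mul_of_mem_Icc (hmeas i).aemeasurable (hbound i)
  have hmgf := hindep.mgf_sum_le hmeas hbound Finset.univ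
  rw [show (m : ℝ) * α * β = α * (m * β) by ring, hmean]
  constructor
  · refine (measure_mono fun ω hω => ?_).trans
      (measure_upper_tail_le_of_mgf_le hE hint hmgf hα0 (by linarith) (m * β))
    simp only [Set.mem_ofPred_eq, Finset.sum_apply, gt_iff_lt, lt_div_iff₀ hm0] at hω ⊢
    field_simp at hω
    linarith
  · refine (measure_mono fun ω hω => ?_).trans
      (measure_lower_tail_le_of_mgf_le hE hint hmgf hα0 (by linarith) (m * β))
    simp only [Set.mem_ofPred_eq, Finset.sum_apply, div_lt_iff₀ hm0] at hω ⊢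
    field_simp at hω
    linarith

/-- a Chernoff-type bound with a multiplicative factor `α` and an additive
slack `β` for the average of `m` independent `[0,1]`-valued random variables. -/
theorem stmt14 {Ω : Type*} [MeasurableSpace Ω]
    (μ : Measure Ω) [IsProbabilityMeasure μ]
    (m : ℕ) (hm : 1 ≤ m)
    (X : Fin m → Ω → ℝ)
    (hmeas : ∀ i, Measurable (X i))
    (hindep : iIndepFun X μ)
    (hbound : ∀ i, ∀ᵐ ω ∂μ, X i ω ∈ Set.Icc (0:ℝ) 1)
    (α β : ℝ) (hα : α ∈ Set.Icc (0:ℝ) 1) (hβ : 0 ≤ β) :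
    μ {ω | (∑ i, X i ω) / m >
        (1 + α) * (∫ ω, (∑ i, X i ω) / m ∂μ) + β}
      ≤ ENNReal.ofReal (Real.exp (-(m * α * β) / 3))
    ∧
    μ {ω | (∑ i, X i ω) / m <
        (1 - α) * (∫ ω, (∑ i, X i ω) / m ∂μ) - β}
      ≤ ENNReal.ofReal (Real.exp (-(m * α * β) / 2)) :=
  stmt14_general μ m hm X hmeas hindep hbound α β hα
end

section
/- Let M be a finite matroid on ground set N and let B₁ and B₂ be two bases of M. Then there exists a bijection π : B₁ → B₂ such that for every element e ∈ B₁, the set (B₁ ∖ {e}) ∪ {π(e)} is independent in M. -/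
/-!
Hall's theorem, applied to the relation "`B₁ \ {e} ∪ {f}` is independent" between `e ∈ B₁`
and `f ∈ B₂`. If `S ⊆ B₁` and `f ∈ B₂` is related to no `e ∈ S`, then `f ∈ cl (B₁ \ {e})` for
every `e ∈ S`, so `f ∈ cl (B₁ \ S)`. These `f` thus form an independent set of size at most
`|B₁| - |S|`, leaving at least `|S|` elements of `B₂` related to some `e ∈ S`.
-/

open Set Function

theorem Set.exists_injective_of_forall_encard_le_encard_biUnion {ι α : Type*} {I : Set ι}
    {t : ι → Set α} (ht : ∀ i ∈ I, (t i).Finite)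
    (h : ∀ S ⊆ I, S.Finite → S.encard ≤ (⋃ i ∈ S, t i).encard) :
    ∃ g : I → α, Injective g ∧ ∀ i : I, g i ∈ t i := by
  classical
  let t' (i : I) : Finset α := (ht i i.2).toFinset
  have hall (s : Finset I) : s.card ≤ (s.biUnion t').card := by
    have hs := h (Subtype.val '' (s : Set I)) (by simp) (s.finite_toSet.image _)
    have hunion : ⋃ i ∈ Subtype.val '' (s : Set I), t i = ↑(s.biUnion t') := by
      simp [t']
    rwa [Subtype.val_injective.encard_image, hunion, encard_coe_eq_coe_finsetCard,
      encard_coe_eq_coe_finsetCard, Nat.cast_le] at hs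
  simpa [t'] using (Finset.all_card_le_biUnion_card_iff_exists_injective t').mp hall

namespace Matroid

variable {α : Type*} {M : Matroid α} {I J S B₁ B₂ : Set α}

lemma Indep.closure_sdiff_eq_biInter (hI : M.Indep I) (hS : S.Nonempty) :
    M.closure (I \ S) = ⋂ e ∈ S, M.closure (I \ {e}) := by
  rw [← closure_biInter_eq_biInter_closure_of_biUnion_indep hS (I := fun e ↦ I \ {e})
    (hI.subset (iUnion₂_subset fun _ _ ↦ sdiff_subset))]
  congr 1
  ext x
  simp only [mem_sdiff, mem_iInter, mem_singleton_iff]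
  exact ⟨fun ⟨hxI, hxS⟩ e he ↦ ⟨hxI, fun hxe ↦ hxS (hxe ▸ he)⟩,
    fun hx ↦ ⟨(hx _ hS.some_mem).1, fun hxS ↦ (hx x hxS).2 rfl⟩⟩

lemma Indep.encard_le_of_subset_closure (hI : M.Indep I) (hJ : M.Indep J)
    (hJI : J ⊆ M.closure I) : J.encard ≤ I.encard := by
  rw [← hI.eRk_eq_encard, ← hJ.eRk_eq_encard, ← M.eRk_closure_eq I]
  exact M.eRk_mono hJI

lemma IsBase.encard_le_encard_biUnion_exchange [M.RankFinite] (hB₁ : M.IsBase B₁)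
    (hB₂ : M.IsBase B₂) (hS : S ⊆ B₁) :
    S.encard ≤ (⋃ e ∈ S, {f ∈ B₂ | M.Indep (insert f (B₁ \ {e}))}).encard := by
  obtain rfl | hSne := S.eq_empty_or_nonempty
  · simp
  set T := ⋃ e ∈ S, {f ∈ B₂ | M.Indep (insert f (B₁ \ {e}))}
  have hcl : B₂ \ T ⊆ M.closure (B₁ \ S) := by
    rw [hB₁.indep.closure_sdiff_eq_biInter hSne]
    refine fun f ⟨hfB₂, hfT⟩ ↦ mem_iInter₂.mpr fun e he ↦ ?_
    rw [(hB₁.indep.sdiff _).mem_closure_iff']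
    exact ⟨hB₂.subset_ground hfB₂, fun hind ↦ (hfT (mem_biUnion he ⟨hfB₂, hind⟩)).elim⟩
  have hle := (hB₁.indep.sdiff S).encard_le_of_subset_closure (hB₂.indep.sdiff T) hcl
  have hfin : (B₁ \ S).encard ≠ ⊤ := hB₁.finite.sdiff.encard_lt_top.ne
  refine (ENat.add_le_add_iff_left hfin).mp ?_
  calc (B₁ \ S).encard + S.encard = B₂.encard := by
        rw [encard_sdiff_add_encard_of_subset hS, hB₁.encard_eq_encard_of_isBase hB₂]
    _ ≤ (B₂ \ T).encard + T.encard := by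
        rw [encard_sdiff_add_encard]; exact encard_le_encard subset_union_left
    _ ≤ (B₁ \ S).encard + T.encard := by gcongr

end Matroid

/-- for any two bases `B₁`, `B₂` of a finite matroid `M`, there is a
bijection `π : B₁ → B₂` such that for every `e ∈ B₁` the set `(B₁ ∖ {e}) ∪ {π(e)}`
is independent in `M`. -/
theorem stmt15 {N : Type*} (M : Matroid N) [M.Finite]
    (B₁ B₂ : Set N) (hB₁ : M.IsBase B₁) (hB₂ : M.IsBase B₂) :
    ∃ π : B₁ → B₂, Function.Bijective π ∧
      ∀ e : B₁, M.Indep ((B₁ \ {(e : N)}) ∪ {(π e : N)}) := by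
  obtain ⟨g, hg_inj, hg⟩ := exists_injective_of_forall_encard_le_encard_biUnion
    (t := fun e ↦ {f ∈ B₂ | M.Indep (insert f (B₁ \ {e}))})
    (fun _ _ ↦ hB₂.finite.subset (sep_subset _ _))
    (fun _ hS _ ↦ hB₁.encard_le_encard_biUnion_exchange hB₂ hS)
  let π (e : B₁) : B₂ := ⟨g e, (hg e).1⟩
  have : Finite B₂ := hB₂.finite.to_subtype
  have hπ : Bijective π := by
    refine Injective.bijective_of_nat_card_le (fun e e' h ↦ hg_inj (congrArg Subtype.val h)) ?_
    rw [Nat.card_coe_set_eq, Nat.card_coe_set_eq, hB₂.ncard_eq_ncard_of_isBase hB₁]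
  exact ⟨π, hπ, fun e ↦ union_singleton ▸ (hg e).2⟩
end

section
/- Let ε ∈ (0,1], M ≥ 0, P ≥ 0, and let F : ℕ → ℝ satisfy F(0) ≥ 0 and, for every t ≥ 1, F(t) ≥ ε·(1−ε)^{t+2}·M + (1−ε)·F(t−1) − ε²·P. Then for every t ≥ 0, F(t) ≥ t·ε·(1−ε)^{t+2}·M − t·ε²·P. -/
/-- the recurrence of the per-step progress analysis of discretized
continuous greedy: if `F 0 ≥ 0` and
`F t ≥ ε·(1−ε)^{t+2}·M + (1−ε)·F (t−1) − ε²·P` for all `t ≥ 1`, then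
`F t ≥ t·ε·(1−ε)^{t+2}·M − t·ε²·P` for every `t`. -/
theorem stmt17 (ε : ℝ) (hε : ε ∈ Set.Ioc (0:ℝ) 1)
    (M P : ℝ) (hM : 0 ≤ M) (hP : 0 ≤ P)
    (F : ℕ → ℝ) (hF0 : 0 ≤ F 0)
    (hrec : ∀ t : ℕ, 1 ≤ t →
      F t ≥ ε * (1 - ε) ^ (t + 2) * M + (1 - ε) * F (t - 1) - ε ^ 2 * P) :
    ∀ t : ℕ, F t ≥ (t:ℝ) * ε * (1 - ε) ^ (t + 2) * M - (t:ℝ) * ε ^ 2 * P := by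
  obtain ⟨hε0, hε1⟩ := hε
  have h1ε : 0 ≤ 1 - ε := by linarith
  intro t
  induction t with
  | zero => simpa using hF0
  | succ n ih =>
    have hrec' := hrec (n+1) (Nat.le_add_left 1 n)
    simp only [Nat.add_sub_cancel] at hrec'
    have key : (1 - ε) * F n ≥ (1 - ε) * ((n:ℝ) * ε * (1 - ε) ^ (n + 2) * M - (n:ℝ) * ε ^ 2 * P) :=
      mul_le_mul_of_nonneg_left ih h1ε
    have hpow : (1 - ε) * (1 - ε) ^ (n + 2) = (1 - ε) ^ (n + 1 + 2) := by ring
    have hPterm : (1 - ε) * ((n:ℝ) * ε ^ 2 * P) ≤ (n:ℝ) * ε ^ 2 * P := by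
      have hn : (0:ℝ) ≤ (n:ℝ) * ε ^ 2 * P := by positivity
      nlinarith
    have heq : (1 - ε) * ((n:ℝ) * ε * (1 - ε) ^ (n + 2) * M - (n:ℝ) * ε ^ 2 * P)
        = (n:ℝ) * ε * (1 - ε) ^ (n + 1 + 2) * M - (1 - ε) * ((n:ℝ) * ε ^ 2 * P) := by
      rw [show n + 1 + 2 = (n + 2) + 1 from rfl, pow_succ]; ring
    rw [heq] at key
    have : F (n+1) ≥ ε * (1 - ε) ^ (n + 1 + 2) * M
        + (n:ℝ) * ε * (1 - ε) ^ (n + 1 + 2) * M - (n:ℝ) * ε ^ 2 * P - ε ^ 2 * P := by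
      linarith
    push_cast
    nlinarith [this]
end

section
/- Let V be a finite ground set and f : Finset V → ℝ a nonnegative, monotone, submodular function. Let T₁, T₂, O', Q ⊆ V be finite sets satisfying f(T₁) ≥ (1/2)·f(T₁ ∪ O') and f(T₁ ∪ T₂) − f(T₁) ≥ (1/2)·(f(T₁ ∪ T₂ ∪ Q) − f(T₁)). Then f(T₁ ∪ T₂) ≥ (1/2)·f(O' ∪ Q). -/
lemma stmt19_aux {V : Type*} [DecidableEq V]
    (f : Finset V → ℝ)
    (hsub : ∀ A B : Finset V, A ⊆ B → ∀ e ∉ B,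
      f (insert e A) - f A ≥ f (insert e B) - f B)
    (hmono : ∀ A B : Finset V, A ⊆ B → f A ≤ f B) :
    ∀ (C X Y : Finset V), X ⊆ Y → f (Y ∪ C) - f Y ≤ f (X ∪ C) - f X := by
  intro C
  induction C using Finset.induction with
  | empty => intro X Y h; simp
  | @insert e C he ih =>
    intro X Y hXY
    have h1 : f (Y ∪ C) - f Y ≤ f (X ∪ C) - f X := ih X Y hXY
    have h2 : f (insert e (Y ∪ C)) - f (Y ∪ C) ≤ f (insert e (X ∪ C)) - f (X ∪ C) := by
      by_cases heY : e ∈ Y ∪ C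
      · rw [Finset.insert_eq_self.2 heY]
        have : f (X ∪ C) ≤ f (insert e (X ∪ C)) :=
          hmono _ _ (Finset.subset_insert _ _)
        linarith
      · exact hsub (X ∪ C) (Y ∪ C) (Finset.union_subset_union_left hXY) e heY
    have e1 : Y ∪ insert e C = insert e (Y ∪ C) := by
      simp [Finset.union_insert]
    have e2 : X ∪ insert e C = insert e (X ∪ C) := by
      simp [Finset.union_insert]
    rw [e1, e2]
    linarith

/-- combining the two greedy-phase inequalities of the two-round algorithm
for a cardinality constraint: if `f(T₁) ≥ (1/2)·f(T₁ ∪ O')` and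
`f(T₁ ∪ T₂) − f(T₁) ≥ (1/2)·(f(T₁ ∪ T₂ ∪ Q) − f(T₁))`, then
`f(T₁ ∪ T₂) ≥ (1/2)·f(O' ∪ Q)`. -/
theorem stmt19 {V : Type*} [Fintype V] [DecidableEq V]
    (f : Finset V → ℝ)
    (hsub : ∀ A B : Finset V, A ⊆ B → ∀ e ∉ B,
      f (insert e A) - f A ≥ f (insert e B) - f B)
    (hmono : ∀ A B : Finset V, A ⊆ B → f A ≤ f B)
    (hnn : ∀ S : Finset V, 0 ≤ f S)
    (T₁ T₂ O' Q : Finset V)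
    (h1 : f T₁ ≥ (1 / 2) * f (T₁ ∪ O'))
    (h2 : f (T₁ ∪ T₂) - f T₁ ≥ (1 / 2) * (f (T₁ ∪ T₂ ∪ Q) - f T₁)) :
    f (T₁ ∪ T₂) ≥ (1 / 2) * f (O' ∪ Q) := by
  -- submodularity on pairs: f(A ∪ B) + f(A ∩ B) ≤ f A + f B
  set A := T₁ ∪ T₂ ∪ Q
  set B := T₁ ∪ O'
  have hsm : f (A ∪ B) - f A ≤ f ((A ∩ B) ∪ B) - f (A ∩ B) :=
    stmt19_aux f hsub hmono B (A ∩ B) A Finset.inter_subset_left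
  have hB : (A ∩ B) ∪ B = B := Finset.union_eq_right.2 Finset.inter_subset_right
  rw [hB] at hsm
  have hT₁ : T₁ ⊆ A ∩ B := by
    apply Finset.subset_inter
    · exact (Finset.subset_union_left).trans Finset.subset_union_left
    · exact Finset.subset_union_left
  have hm1 : f T₁ ≤ f (A ∩ B) := hmono _ _ hT₁
  have hOQ : O' ∪ Q ⊆ A ∪ B := by
    apply Finset.union_subset
    · exact Finset.subset_union_right.trans Finset.subset_union_right
    · exact Finset.subset_union_right.trans Finset.subset_union_left
  have hm2 : f (O' ∪ Q) ≤ f (A ∪ B) := hmono _ _ hOQ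
  linarith
end
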